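/- Let λ > 0 be a root of the equation −(1/λ) log(1 − λ²/(4(exp(λ) − 1 − λ))) = 1, let L(x) = max{−1, min{1, x}}, let a = 2(exp(λ) − 1 − λ)/λ², and define the estimator θ̂_α(θ₀) = θ₀ + (λ/(n α)) Σ_{i=1}^n L((α/λ)(Y_i − θ₀)). Assume v ≤ v₀ and |m − θ₀| ≤ δ₀, where v₀ > 0 and δ₀ ≥ 0 are known prior bounds. Then for every α > 0 and ε ∈ (0,1), with probability at least 1 − 2ε, |θ̂_α(θ₀) − m| ≤ a α (v₀ + δ₀²)/2 + log(ε⁻¹)/(n α). In particular, for α = √(2 log(ε⁻¹)/(a (v₀ + δ₀²) n)), with probability at least 1 − 2ε, |θ̂_α(θ₀) − m| ≤ √(2 a (v₀ + δ₀²) log(ε⁻¹)/n). -/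

import Mathlib

/-! The clipping is tuned so that `exp (λ L(t/λ)) ≤ 1 + t + (a/2) t²` for every real `t`: for
`0 ≤ t ≤ λ` this is the monotonicity of `(eᵗ - 1 - t)/t²` (which is where `a` comes from), for
`t ≥ λ` it follows from the case `t = λ`, and for `t ≤ -λ` it is the root condition on `λ`, saying that
`e^{-λ}` equals the minimum `1 - 1/(2a)` of the quadratic. With `t = β (y - θ₀)` this bounds the
exponential moment of each clipped summand by `exp (β (m - θ₀) + a β² (v + (m - θ₀)²)/2)`, so a
Chernoff bound for the i.i.d. sum, applied with `β = α` and `β = -α`, controls both tails of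
`θ̂_α(θ₀) - m`. The second claim is the first at the `α` that balances the two terms of the bound. -/

open MeasureTheory ProbabilityTheory

/-- The simple clipping function `L(x) = max {-1, min {1, x}}`. -/
noncomputable def clipL (x : ℝ) : ℝ := max (-1) (min 1 x)

/-- The truncated mean estimator built from the simple clipping function:
`θ̂_α(θ₀) = θ₀ + (λ/(n α)) ∑ᵢ L ((α/λ) (Yᵢ - θ₀))`. -/
noncomputable def thetaHatClip (n : ℕ) (lam α θ₀ : ℝ) (Y : Fin n → ℝ) : ℝ :=
  θ₀ + (lam / (n * α)) * ∑ i, clipL ((α / lam) * (Y i - θ₀))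

open Real

lemma clipL_neg (x : ℝ) : clipL (-x) = -clipL x := by
  simp only [clipL, min_def, max_def]; split_ifs <;> linarith

lemma clipL_le_one (x : ℝ) : clipL x ≤ 1 :=
  max_le (by norm_num) (min_le_left 1 x)

lemma clipL_of_one_le {x : ℝ} (h : 1 ≤ x) : clipL x = 1 := by
  simp [clipL, h]

lemma clipL_of_le_neg_one {x : ℝ} (h : x ≤ -1) : clipL x = -1 := by
  rw [clipL, min_eq_right (h.trans (by norm_num)), max_eq_left h]

lemma clipL_of_abs_le_one {x : ℝ} (h : |x| ≤ 1) : clipL x = x := by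
  obtain ⟨h1, h2⟩ := abs_le.1 h
  simp [clipL, h1, h2]

lemma continuous_clipL : Continuous clipL :=
  continuous_const.max (continuous_const.min continuous_id)

lemma exp_le_quadratic_of_nonpos {t : ℝ} (ht : t ≤ 0) : exp t ≤ 1 + t + t ^ 2 / 2 := by
  have hcubic : 1 - t + t ^ 2 / 2 - t ^ 3 / 6 ≤ exp (-t) := by
    have := sum_le_exp_of_nonneg (neg_nonneg.2 ht) 4
    norm_num [Finset.sum_range_succ, Nat.factorial] at this
    linarith
  have hq : 0 < 1 + t + t ^ 2 / 2 := by nlinarith [sq_nonneg (t + 1)]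
  have hprod : 1 ≤ (1 + t + t ^ 2 / 2) * exp (-t) :=
    calc (1 : ℝ) ≤ (1 + t + t ^ 2 / 2) * (1 - t + t ^ 2 / 2 - t ^ 3 / 6) := by
          nlinarith [pow_nonneg (neg_nonneg.2 ht) 3, pow_nonneg (neg_nonneg.2 ht) 4,
            pow_nonneg (neg_nonneg.2 ht) 5]
      _ ≤ (1 + t + t ^ 2 / 2) * exp (-t) := mul_le_mul_of_nonneg_left hcubic hq.le
  calc exp t ≤ exp t * ((1 + t + t ^ 2 / 2) * exp (-t)) :=
        le_mul_of_one_le_right (exp_pos t).le hprod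
    _ = 1 + t + t ^ 2 / 2 := by rw [mul_left_comm, ← exp_add, add_neg_cancel, exp_zero, mul_one]

lemma hasSum_exp_sub_one_sub (x : ℝ) :
    HasSum (fun n : ℕ => x ^ (n + 2) / (n + 2).factorial) (exp x - 1 - x) := by
  have h := NormedSpace.expSeries_div_hasSum_exp x
  rw [← Real.exp_eq_exp_ℝ, ← hasSum_nat_add_iff' 2] at h
  simpa [Finset.sum_range_succ, sub_add_eq_sub_sub] using h

lemma sq_mul_exp_sub_one_sub_le {t s : ℝ} (ht : 0 ≤ t) (hts : t ≤ s) :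
    s ^ 2 * (exp t - 1 - t) ≤ t ^ 2 * (exp s - 1 - s) := by
  refine hasSum_le (fun n => ?_) ((hasSum_exp_sub_one_sub t).mul_left _)
    ((hasSum_exp_sub_one_sub s).mul_left _)
  rw [mul_div_assoc', mul_div_assoc']
  gcongr ?_ / _
  calc s ^ 2 * t ^ (n + 2) = t ^ 2 * (s ^ 2 * t ^ n) := by ring
    _ ≤ t ^ 2 * (s ^ 2 * s ^ n) := by gcongr
    _ = t ^ 2 * s ^ (n + 2) := by ring

lemma one_le_two_mul_exp_sub_one_sub_div_sq {lam : ℝ} (hlam : 0 < lam) :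
    1 ≤ 2 * (exp lam - 1 - lam) / lam ^ 2 := by
  rw [le_div_iff₀ (by positivity)]
  linarith [quadratic_le_exp_of_nonneg hlam.le]

lemma exp_neg_eq_of_root {lam : ℝ} (hlam : 0 < lam)
    (hroot : -(1 / lam) * log (1 - lam ^ 2 / (4 * (exp lam - 1 - lam))) = 1) :
    exp (-lam) = 1 - lam ^ 2 / (4 * (exp lam - 1 - lam)) := by
  have hD : lam ^ 2 ≤ 2 * (exp lam - 1 - lam) := by
    have := one_le_two_mul_exp_sub_one_sub_div_sq hlam
    rwa [le_div_iff₀ (by positivity), one_mul] at this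
  have hpos : 0 < 1 - lam ^ 2 / (4 * (exp lam - 1 - lam)) := by
    rw [sub_pos, div_lt_one (by nlinarith [pow_pos hlam 2])]
    nlinarith [pow_pos hlam 2]
  have hlog : log (1 - lam ^ 2 / (4 * (exp lam - 1 - lam))) = -lam := by
    calc log (1 - lam ^ 2 / (4 * (exp lam - 1 - lam)))
        = -lam * (-(1 / lam) * log (1 - lam ^ 2 / (4 * (exp lam - 1 - lam)))) := by
          field_simp
      _ = -lam := by rw [hroot, mul_one]
  rw [← hlog, exp_log hpos]

lemma exp_mul_clipL_le {lam a : ℝ} (hlam : 0 < lam) (ha : 2 * (exp lam - 1 - lam) / lam ^ 2 ≤ a)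
    (hneg : exp (-lam) ≤ 1 - 1 / (2 * a)) (t : ℝ) :
    exp (lam * clipL (t / lam)) ≤ 1 + t + a / 2 * t ^ 2 := by
  have hexp : exp lam - 1 - lam ≤ a / 2 * lam ^ 2 := by
    rw [div_le_iff₀ (by positivity)] at ha; linarith
  have ha1 : 1 ≤ a := (one_le_two_mul_exp_sub_one_sub_div_sq hlam).trans ha
  rcases le_total lam t with hlt | htl
  · rw [clipL_of_one_le ((one_le_div hlam).2 hlt), mul_one]
    have hfactor : 0 ≤ a / 2 * (t + lam) + 1 :=
      add_nonneg (mul_nonneg (by linarith) (by linarith)) zero_le_one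
    nlinarith [mul_nonneg (sub_nonneg.2 hlt) hfactor]
  rcases le_total t (-lam) with htl' | hlt'
  · rw [clipL_of_le_neg_one ((div_le_iff₀ hlam).2 (by linarith)), mul_neg_one]
    have hsq : 0 ≤ 1 + t + a / 2 * t ^ 2 - (1 - 1 / (2 * a)) := by
      have : 1 + t + a / 2 * t ^ 2 - (1 - 1 / (2 * a)) = (a * t + 1) ^ 2 / (2 * a) := by
        field_simp; ring
      rw [this]; positivity
    linarith
  have hclip : |t / lam| ≤ 1 := by
    rw [abs_div, abs_of_pos hlam, div_le_one hlam]; exact abs_le.2 ⟨hlt', htl⟩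
  rw [clipL_of_abs_le_one hclip, mul_div_cancel₀ _ hlam.ne']
  rcases le_total 0 t with ht | ht
  · have := sq_mul_exp_sub_one_sub_le ht htl
    have hlam2 : 0 < lam ^ 2 := by positivity
    nlinarith [mul_le_mul_of_nonneg_left hexp (sq_nonneg t)]
  · nlinarith [exp_le_quadratic_of_nonpos ht, sq_nonneg t]

section Chernoff

variable {Ω ι : Type*} [MeasurableSpace Ω] {P : Measure Ω} [IsProbabilityMeasure P] [Fintype ι]

theorem measure_sum_ge_le_of_mgf_le {X : ι → Ω → ℝ} (hindep : iIndepFun X P)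
    (hmeas : ∀ i, Measurable (X i)) (hint : ∀ i, Integrable (fun ω => exp (X i ω)) P)
    {b : ℝ} (hmgf : ∀ i, mgf (X i) P 1 ≤ exp b) {ε : ℝ} (hε : 0 < ε) :
    P {ω | Fintype.card ι * b + log ε⁻¹ ≤ ∑ i, X i ω} ≤ ENNReal.ofReal ε := by
  have hsum_int : Integrable (fun ω => exp (1 * (∑ i, X i) ω)) P :=
    hindep.integrable_exp_mul_sum hmeas (fun i _ => by simpa using hint i)
  have hchernoff := measure_ge_le_exp_mul_mgf (Fintype.card ι * b + log ε⁻¹) zero_le_one hsum_int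
  rw [hindep.mgf_sum hmeas] at hchernoff
  have hprod : ∏ i, mgf (X i) P 1 ≤ exp b ^ Fintype.card ι := by
    simpa using Finset.prod_le_prod (s := Finset.univ) (fun i _ => mgf_nonneg) (fun i _ => hmgf i)
  have hbound : exp (-1 * (Fintype.card ι * b + log ε⁻¹)) * exp b ^ Fintype.card ι = ε := by
    rw [← exp_nat_mul, ← exp_add, log_inv]
    convert exp_log hε using 2
    ring
  simp only [Finset.sum_apply] at hchernoff
  rw [ENNReal.le_ofReal_iff_toReal_le (measure_ne_top _ _) hε.le, ← measureReal_def]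
  calc P.real _ ≤ _ := hchernoff
    _ ≤ exp (-1 * (Fintype.card ι * b + log ε⁻¹)) * exp b ^ Fintype.card ι := by gcongr
    _ = ε := hbound

theorem measure_sum_comp_ge_le {E : Type*} [MeasurableSpace E] {Y : ι → Ω → E}
    (hindep : iIndepFun Y P) (hmeas : ∀ i, Measurable (Y i)) {μ : Measure E}
    (hid : ∀ i, P.map (Y i) = μ) {ψ : E → ℝ} (hψ : Measurable ψ)
    (hint : Integrable (fun y => exp (ψ y)) μ) {b : ℝ} (hb : ∫ y, exp (ψ y) ∂μ ≤ exp b)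
    {ε : ℝ} (hε : 0 < ε) :
    P {ω | Fintype.card ι * b + log ε⁻¹ ≤ ∑ i, ψ (Y i ω)} ≤ ENNReal.ofReal ε := by
  have hexp : Measurable fun y => exp (ψ y) := hψ.exp
  refine measure_sum_ge_le_of_mgf_le (X := fun i ω => ψ (Y i ω))
    (hindep.comp (fun _ => ψ) (fun _ => hψ)) (fun i => hψ.comp (hmeas i)) (fun i => ?_)
    (fun i => ?_) hε
  · rw [← hid i] at hint
    exact (integrable_map_measure hexp.aestronglyMeasurable (hmeas i).aemeasurable).1 hint
  · rw [← hid i, integral_map (hmeas i).aemeasurable hexp.aestronglyMeasurable] at hb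
    simpa [mgf] using hb

end Chernoff

section SecondMoment

variable {μ : Measure ℝ} [IsProbabilityMeasure μ]

lemma integrable_id_of_integrable_sq (hL2 : Integrable (fun y => y ^ 2) μ) :
    Integrable (fun y : ℝ => y) μ :=
  ((memLp_two_iff_integrable_sq aestronglyMeasurable_id).2 hL2).integrable one_le_two

lemma integral_add_mul_add_mul_sq (hL2 : Integrable (fun y => y ^ 2) μ) (c₀ c₁ c₂ : ℝ) :
    ∫ y, (c₀ + c₁ * y + c₂ * y ^ 2) ∂μ = c₀ + c₁ * ∫ y, y ∂μ + c₂ * ∫ y, y ^ 2 ∂μ := by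
  have hL1 := integrable_id_of_integrable_sq hL2
  have hlin : Integrable (fun y => c₀ + c₁ * y) μ := (integrable_const c₀).add (hL1.const_mul c₁)
  rw [integral_add hlin (hL2.const_mul c₂),
    integral_add (integrable_const c₀) (hL1.const_mul c₁), integral_const_mul, integral_const_mul,
    integral_const, probReal_univ, one_smul]

lemma integral_sub_sq (hL2 : Integrable (fun y => y ^ 2) μ) (θ : ℝ) :
    ∫ y, (y - θ) ^ 2 ∂μ = θ ^ 2 - 2 * θ * ∫ y, y ∂μ + ∫ y, y ^ 2 ∂μ := by
  have hsq (y : ℝ) : (y - θ) ^ 2 = θ ^ 2 + (-2 * θ) * y + 1 * y ^ 2 := by ring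
  simp only [hsq, integral_add_mul_add_mul_sq hL2]
  ring

lemma integral_one_add_mul_sub_add_mul_sub_sq (hL2 : Integrable (fun y => y ^ 2) μ)
    (β c θ : ℝ) :
    ∫ y, (1 + β * (y - θ) + c * (y - θ) ^ 2) ∂μ
      = 1 + β * (∫ y, y ∂μ - θ) + c * ∫ y, (y - θ) ^ 2 ∂μ := by
  have hquad (y : ℝ) : 1 + β * (y - θ) + c * (y - θ) ^ 2
      = (1 - β * θ + c * θ ^ 2) + (β - 2 * c * θ) * y + c * y ^ 2 := by ring
  simp only [hquad, integral_add_mul_add_mul_sq hL2, integral_sub_sq hL2]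
  ring

lemma integral_sub_sq_eq_add_sq (hL2 : Integrable (fun y => y ^ 2) μ) (θ : ℝ) :
    ∫ y, (y - θ) ^ 2 ∂μ = ∫ y, (y - ∫ z, z ∂μ) ^ 2 ∂μ + (∫ z, z ∂μ - θ) ^ 2 := by
  rw [integral_sub_sq hL2, integral_sub_sq hL2]
  ring

end SecondMoment

lemma thetaHatClip_neg (n : ℕ) (lam α θ₀ : ℝ) (y : Fin n → ℝ) :
    thetaHatClip n lam (-α) θ₀ y = thetaHatClip n lam α θ₀ y := by
  simp only [thetaHatClip, neg_div, neg_mul, clipL_neg, Finset.sum_neg_distrib, mul_neg, div_neg,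
    neg_neg]

lemma mul_thetaHatClip_sub {n : ℕ} (hn : 0 < n) {α : ℝ} (hα : α ≠ 0) (lam θ₀ : ℝ)
    (y : Fin n → ℝ) :
    n * α * (thetaHatClip n lam α θ₀ y - θ₀) = ∑ i, lam * clipL ((α / lam) * (y i - θ₀)) := by
  have : (n : ℝ) * α ≠ 0 := mul_ne_zero (Nat.cast_ne_zero.2 hn.ne') hα
  rw [thetaHatClip, add_sub_cancel_left, ← Finset.mul_sum]
  field_simp

lemma integrable_exp_mul_clipL {E : Type*} [MeasurableSpace E] {μ : Measure E} [IsFiniteMeasure μ]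
    {f : E → ℝ} (hf : Measurable f) {lam : ℝ} (hlam : 0 ≤ lam) :
    Integrable (fun y => exp (lam * clipL (f y))) μ := by
  refine .of_bound ((continuous_clipL.measurable.comp hf).const_mul lam).exp.aestronglyMeasurable
    (exp lam) (ae_of_all _ fun y => ?_)
  rw [norm_of_nonneg (exp_pos _).le, exp_le_exp]
  exact mul_le_of_le_one_right hlam (clipL_le_one _)

lemma integral_exp_mul_clipL_le {μ : Measure ℝ} [IsProbabilityMeasure μ]
    (hL2 : Integrable (fun y => y ^ 2) μ) {lam a : ℝ} (hlam : 0 < lam)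
    (ha : 2 * (exp lam - 1 - lam) / lam ^ 2 ≤ a) (hneg : exp (-lam) ≤ 1 - 1 / (2 * a))
    (β θ : ℝ) {K : ℝ} (hK : ∫ y, (y - θ) ^ 2 ∂μ ≤ K) :
    ∫ y, exp (lam * clipL ((β / lam) * (y - θ))) ∂μ
      ≤ exp (β * (∫ y, y ∂μ - θ) + a * β ^ 2 * K / 2) := by
  have ha0 : 0 ≤ a := zero_le_one.trans ((one_le_two_mul_exp_sub_one_sub_div_sq hlam).trans ha)
  have hpointwise (y : ℝ) : exp (lam * clipL ((β / lam) * (y - θ)))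
      ≤ 1 + β * (y - θ) + a / 2 * β ^ 2 * (y - θ) ^ 2 := by
    have := exp_mul_clipL_le hlam ha hneg (β * (y - θ))
    rwa [mul_div_right_comm, mul_pow, ← mul_assoc] at this
  have hint : Integrable (fun y => exp (lam * clipL ((β / lam) * (y - θ)))) μ :=
    integrable_exp_mul_clipL (by fun_prop) hlam.le
  have hquad : Integrable (fun y => 1 + β * (y - θ) + a / 2 * β ^ 2 * (y - θ) ^ 2) μ := by
    have hsq : Integrable (fun y => (y - θ) ^ 2) μ :=
      (((memLp_two_iff_integrable_sq aestronglyMeasurable_id).2 hL2).sub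
        (memLp_const θ)).integrable_sq
    exact ((integrable_const 1).add (((integrable_id_of_integrable_sq hL2).sub
      (integrable_const θ)).const_mul β)).add (hsq.const_mul _)
  calc ∫ y, exp (lam * clipL ((β / lam) * (y - θ))) ∂μ
      ≤ ∫ y, (1 + β * (y - θ) + a / 2 * β ^ 2 * (y - θ) ^ 2) ∂μ :=
        integral_mono hint hquad hpointwise
    _ = 1 + (β * (∫ y, y ∂μ - θ) + a / 2 * β ^ 2 * ∫ y, (y - θ) ^ 2 ∂μ) := by
        rw [integral_one_add_mul_sub_add_mul_sub_sq hL2, add_assoc]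
    _ ≤ 1 + (β * (∫ y, y ∂μ - θ) + a * β ^ 2 * K / 2) := by
        have := mul_le_mul_of_nonneg_left hK (by positivity : 0 ≤ a / 2 * β ^ 2)
        linarith
    _ ≤ exp (β * (∫ y, y ∂μ - θ) + a * β ^ 2 * K / 2) := by
        linarith [add_one_le_exp (β * (∫ y, y ∂μ - θ) + a * β ^ 2 * K / 2)]

section Estimator

variable {Ω : Type*} [MeasurableSpace Ω] {P : Measure Ω} [IsProbabilityMeasure P] {n : ℕ}
  {Y : Fin n → Ω → ℝ} {μ : Measure ℝ} [IsProbabilityMeasure μ] {lam a K θ₀ ε : ℝ}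

lemma measure_mul_thetaHatClip_sub_ge_le (hn : 0 < n) (hindep : iIndepFun Y P)
    (hmeas : ∀ i, Measurable (Y i)) (hid : ∀ i, P.map (Y i) = μ)
    (hL2 : Integrable (fun y => y ^ 2) μ) (hlam : 0 < lam)
    (ha : 2 * (exp lam - 1 - lam) / lam ^ 2 ≤ a) (hneg : exp (-lam) ≤ 1 - 1 / (2 * a))
    (hK : ∫ y, (y - θ₀) ^ 2 ∂μ ≤ K) (hε : 0 < ε) {β : ℝ} (hβ : β ≠ 0) :
    P {ω | a * β ^ 2 * K / 2 + log ε⁻¹ / n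
        ≤ β * (thetaHatClip n lam β θ₀ (fun i => Y i ω) - ∫ y, y ∂μ)} ≤ ENNReal.ofReal ε := by
  have hψ : Measurable fun y : ℝ => lam * clipL ((β / lam) * (y - θ₀)) :=
    (continuous_clipL.measurable.comp (by fun_prop)).const_mul lam
  refine (measure_mono fun ω hω => ?_).trans (measure_sum_comp_ge_le hindep hmeas hid
    hψ (integrable_exp_mul_clipL (by fun_prop) hlam.le)
    (integral_exp_mul_clipL_le hL2 hlam ha hneg β θ₀ hK) hε)
  have hn' : (0 : ℝ) < n := Nat.cast_pos.2 hn
  simp only [Set.mem_ofPred_eq, Fintype.card_fin] at hω ⊢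
  rw [← mul_thetaHatClip_sub hn hβ]
  have := mul_le_mul_of_nonneg_left hω hn'.le
  rw [mul_add, mul_div_cancel₀ _ hn'.ne'] at this
  linarith

theorem ofReal_one_sub_two_mul_le_measure_abs_thetaHatClip_sub_le (hn : 0 < n)
    (hindep : iIndepFun Y P) (hmeas : ∀ i, Measurable (Y i)) (hid : ∀ i, P.map (Y i) = μ)
    (hL2 : Integrable (fun y => y ^ 2) μ) (hlam : 0 < lam)
    (ha : 2 * (exp lam - 1 - lam) / lam ^ 2 ≤ a) (hneg : exp (-lam) ≤ 1 - 1 / (2 * a))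
    (hK : ∫ y, (y - θ₀) ^ 2 ∂μ ≤ K) (hε : 0 < ε) {α : ℝ} (hα : 0 < α) :
    ENNReal.ofReal (1 - 2 * ε) ≤ P {ω | |thetaHatClip n lam α θ₀ (fun i => Y i ω) - ∫ y, y ∂μ|
        ≤ a * α * K / 2 + log ε⁻¹ / (n * α)} := by
  set G := {ω | |thetaHatClip n lam α θ₀ (fun i => Y i ω) - ∫ y, y ∂μ|
    ≤ a * α * K / 2 + log ε⁻¹ / (n * α)}
  have hαB : α * (a * α * K / 2 + log ε⁻¹ / (n * α)) = a * α ^ 2 * K / 2 + log ε⁻¹ / n := by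
    field_simp
  have hbad : Gᶜ ⊆
      {ω | a * α ^ 2 * K / 2 + log ε⁻¹ / n
        ≤ α * (thetaHatClip n lam α θ₀ (fun i => Y i ω) - ∫ y, y ∂μ)} ∪
      {ω | a * (-α) ^ 2 * K / 2 + log ε⁻¹ / n
        ≤ -α * (thetaHatClip n lam (-α) θ₀ (fun i => Y i ω) - ∫ y, y ∂μ)} := by
    intro ω hω
    simp only [G, Set.mem_compl_iff, Set.mem_ofPred_eq, not_le, Set.mem_union, thetaHatClip_neg,
      neg_sq] at hω ⊢
    rcases lt_abs.1 hω with h | h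
    · exact .inl (hαB ▸ mul_le_mul_of_nonneg_left h.le hα.le)
    · refine .inr ?_
      have := mul_le_mul_of_nonneg_left h.le hα.le
      linarith
  have hPbad : P Gᶜ ≤ ENNReal.ofReal (2 * ε) := by
    rw [two_mul, ENNReal.ofReal_add hε.le hε.le]
    exact (measure_mono hbad).trans ((measure_union_le _ _).trans (add_le_add
      (measure_mul_thetaHatClip_sub_ge_le hn hindep hmeas hid hL2 hlam ha hneg hK hε hα.ne')
      (measure_mul_thetaHatClip_sub_ge_le hn hindep hmeas hid hL2 hlam ha hneg hK hε
        (neg_ne_zero.2 hα.ne'))))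
  calc ENNReal.ofReal (1 - 2 * ε) = 1 - ENNReal.ofReal (2 * ε) := by
        rw [ENNReal.ofReal_sub _ (by positivity), ENNReal.ofReal_one]
    _ ≤ 1 - P Gᶜ := by gcongr
    _ ≤ P G := tsub_le_iff_right.2 (by simpa using measure_univ_le_add_compl (μ := P) G)

end Estimator

lemma mul_sqrt_mul_div_add_div_mul_sqrt {a s ℓ N : ℝ} (ha : 0 < a) (hs : 0 < s) (hℓ : 0 < ℓ)
    (hN : 0 < N) :
    a * √(2 * ℓ / (a * s * N)) * s / 2 + ℓ / (N * √(2 * ℓ / (a * s * N)))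
      = √(2 * a * s * ℓ / N) := by
  set r := √(2 * ℓ / (a * s * N))
  have hr : 0 < r := sqrt_pos.2 (by positivity)
  have hr2 : r ^ 2 = 2 * ℓ / (a * s * N) := sq_sqrt (by positivity)
  have hrhs : 2 * a * s * ℓ / N = (a * s * r) ^ 2 := by
    rw [mul_pow, hr2]; field_simp
  rw [hrhs, sqrt_sq (by positivity)]
  field_simp
  rw [hr2]
  field_simp
  ring

theorem clipped_mean_deviation_general
    {Ω : Type*} [MeasurableSpace Ω] (P : Measure Ω) [IsProbabilityMeasure P]
    (n : ℕ) (hn : 0 < n) (Y : Fin n → Ω → ℝ) (hYmeas : ∀ i, Measurable (Y i))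
    (μ : Measure ℝ) [IsProbabilityMeasure μ]
    (hindep : iIndepFun Y P)
    (hid : ∀ i, Measure.map (Y i) P = μ)
    (hL2 : Integrable (fun y => y ^ 2) μ)
    (m v : ℝ) (hm : m = ∫ y, y ∂μ) (hv : v = ∫ y, (y - m) ^ 2 ∂μ)
    (lam : ℝ) (hlam : 0 < lam)
    (hroot : -(1 / lam) * Real.log (1 - lam ^ 2 / (4 * (Real.exp lam - 1 - lam))) = 1)
    (a : ℝ) (ha : a = 2 * (Real.exp lam - 1 - lam) / lam ^ 2)
    (v₀ δ₀ : ℝ) (hv₀ : 0 < v₀) (hvle : v ≤ v₀)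
    (θ₀ : ℝ) (hθ₀ : |m - θ₀| ≤ δ₀)
    (α : ℝ) (hα : 0 < α) (ε : ℝ) (hε : ε ∈ Set.Ioo (0 : ℝ) 1) :
    ENNReal.ofReal (1 - 2 * ε) ≤
      P {ω | |thetaHatClip n lam α θ₀ (fun i => Y i ω) - m| ≤
        a * α * (v₀ + δ₀ ^ 2) / 2 + Real.log ε⁻¹ / (n * α)} ∧
    ENNReal.ofReal (1 - 2 * ε) ≤
      P {ω | |thetaHatClip n lam (Real.sqrt (2 * Real.log ε⁻¹ / (a * (v₀ + δ₀ ^ 2) * n))) θ₀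
          (fun i => Y i ω) - m| ≤
        Real.sqrt (2 * a * (v₀ + δ₀ ^ 2) * Real.log ε⁻¹ / n)} := by
  subst hm hv
  have hK : ∫ y, (y - θ₀) ^ 2 ∂μ ≤ v₀ + δ₀ ^ 2 := by
    rw [integral_sub_sq_eq_add_sq hL2, ← sq_abs]
    gcongr
  have ha' : 2 * (exp lam - 1 - lam) / lam ^ 2 ≤ a := ha.ge
  have hneg : exp (-lam) = 1 - 1 / (2 * a) := by
    rw [exp_neg_eq_of_root hlam hroot, ha, ← mul_div_assoc, ← mul_assoc, one_div_div]
    norm_num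
  have hapos : 0 < a := one_pos.trans_le ((one_le_two_mul_exp_sub_one_sub_div_sq hlam).trans ha')
  have hℓ : 0 < log ε⁻¹ := log_pos (one_lt_inv_iff₀.2 hε)
  have hbound := fun {β} (hβ : 0 < β) =>
    ofReal_one_sub_two_mul_le_measure_abs_thetaHatClip_sub_le hn hindep hYmeas hid hL2 hlam ha'
      hneg.le hK hε.1 hβ
  refine ⟨hbound hα, ?_⟩
  rw [← mul_sqrt_mul_div_add_div_mul_sqrt hapos (by positivity) hℓ (Nat.cast_pos.2 hn)]
  exact hbound (sqrt_pos.2 (by positivity))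

/-- If `λ > 0` is a root of `-(1/λ) log (1 - λ²/(4 (exp λ - 1 - λ))) = 1`,
`a = 2 (exp λ - 1 - λ)/λ²`, `v ≤ v₀` and `|m - θ₀| ≤ δ₀`, then for every `α > 0` and
`ε ∈ (0,1)`, with probability at least `1 - 2ε`,
`|θ̂_α(θ₀) - m| ≤ a α (v₀ + δ₀²)/2 + log (ε⁻¹)/(n α)`; in particular, for
`α = √(2 log (ε⁻¹)/(a (v₀ + δ₀²) n))`, with probability at least `1 - 2ε`,
`|θ̂_α(θ₀) - m| ≤ √(2 a (v₀ + δ₀²) log (ε⁻¹)/n)`. -/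
theorem clipped_mean_deviation
    {Ω : Type*} [MeasurableSpace Ω] (P : Measure Ω) [IsProbabilityMeasure P]
    (n : ℕ) (hn : 0 < n) (Y : Fin n → Ω → ℝ) (hYmeas : ∀ i, Measurable (Y i))
    (μ : Measure ℝ) [IsProbabilityMeasure μ]
    (hindep : iIndepFun Y P)
    (hid : ∀ i, Measure.map (Y i) P = μ)
    (hL2 : Integrable (fun y => y ^ 2) μ)
    (m v : ℝ) (hm : m = ∫ y, y ∂μ) (hv : v = ∫ y, (y - m) ^ 2 ∂μ)
    (lam : ℝ) (hlam : 0 < lam)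
    (hroot : -(1 / lam) * Real.log (1 - lam ^ 2 / (4 * (Real.exp lam - 1 - lam))) = 1)
    (a : ℝ) (ha : a = 2 * (Real.exp lam - 1 - lam) / lam ^ 2)
    (v₀ δ₀ : ℝ) (hv₀ : 0 < v₀) (hδ₀ : 0 ≤ δ₀) (hvle : v ≤ v₀)
    (θ₀ : ℝ) (hθ₀ : |m - θ₀| ≤ δ₀)
    (α : ℝ) (hα : 0 < α) (ε : ℝ) (hε : ε ∈ Set.Ioo (0 : ℝ) 1) :
    ENNReal.ofReal (1 - 2 * ε) ≤
      P {ω | |thetaHatClip n lam α θ₀ (fun i => Y i ω) - m| ≤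
        a * α * (v₀ + δ₀ ^ 2) / 2 + Real.log ε⁻¹ / (n * α)} ∧
    ENNReal.ofReal (1 - 2 * ε) ≤
      P {ω | |thetaHatClip n lam (Real.sqrt (2 * Real.log ε⁻¹ / (a * (v₀ + δ₀ ^ 2) * n))) θ₀
          (fun i => Y i ω) - m| ≤
        Real.sqrt (2 * a * (v₀ + δ₀ ^ 2) * Real.log ε⁻¹ / n)} :=
  clipped_mean_deviation_general P n hn Y hYmeas μ hindep hid hL2 m v hm hv lam hlam hroot a ha v₀
    δ₀ hv₀ hvle θ₀ hθ₀ α hα ε hε
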